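/- Let μ be a finite measure on ℝ and S ⊂ ℝ with μ the Lebesgue measure restricted to S = ⋃_{k≥1} I_k, where I_k = (1/k − ℓ_k/4, 1/k + ℓ_k/4) and ℓ_k = 1/k!. Let w be a weight with w ≥ 1 and w constant on each I_k, with w = (k−2)! on I_k (for k ≥ 3). Then w ∈ L¹(μ), but for every ε > 0, w^{1+ε} ∉ L¹(μ). -/

import Mathlib

open MeasureTheory Set

noncomputable section

/-- The interval I_k = (1/k − ℓ_k/4, 1/k + ℓ_k/4) with ℓ_k = 1/k!. -/
def Ik (k : ℕ) : Set ℝ :=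
  Set.Ioo ((k : ℝ)⁻¹ - 1 / (4 * (Nat.factorial k : ℝ)))
    ((k : ℝ)⁻¹ + 1 / (4 * (Nat.factorial k : ℝ)))

/-! On `I_k` the weight is `(k - 2)!` and `|I_k| = 1 / (2 k!)`, so `∫_{I_k} w ≤ 1 / k²`, which is
summable. Raising `w` to the power `1 + ε` multiplies this mass by `((k - 2)!)^ε`, and since
factorials outgrow every exponential, already a single interval `I_k` carries arbitrarily large
mass of `w ^ (1 + ε)`. -/

open Filter
open scoped Nat ENNReal

lemma volume_Ik (k : ℕ) : volume (Ik k) = ENNReal.ofReal (1 / (2 * k !)) := by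
  rw [Ik, Real.volume_Ioo]
  congr 1
  ring

lemma measurableSet_Ik (k : ℕ) : MeasurableSet (Ik k) := measurableSet_Ioo

lemma setLIntegral_enorm_Ik {f : ℝ → ℝ} {k : ℕ} {c : ℝ} (hc : 0 ≤ c)
    (hf : ∀ x ∈ Ik k, f x = c) :
    ∫⁻ x in Ik k, ‖f x‖ₑ = ENNReal.ofReal (c / (2 * k !)) := by
  rw [setLIntegral_congr_fun (measurableSet_Ik k) (fun x hx => by rw [hf x hx]),
    setLIntegral_const, volume_Ik, Real.enorm_eq_ofReal hc, ← ENNReal.ofReal_mul hc, mul_one_div]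

lemma Nat.factorial_sub_two_mul_sq_le {k : ℕ} (hk : 1 ≤ k) : (k - 2)! * k ^ 2 ≤ 2 * k ! := by
  match k, hk with
  | 1, _ | 2, _ => decide
  | n + 3, _ =>
    have hfac : (n + 3)! = (n + 3) * (n + 2) * (n + 1)! := by
      simp only [Nat.factorial_succ]; ring
    rw [hfac, show n + 3 - 2 = n + 1 by omega]
    have := Nat.factorial_pos (n + 1)
    nlinarith

lemma factorial_sub_two_div_le_one_div_sq {k : ℕ} (hk : 1 ≤ k) :
    ((k - 2)! : ℝ) / (2 * k !) ≤ 1 / k ^ 2 := by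
  have hk0 : (0 : ℝ) < k := by exact_mod_cast hk
  rw [div_le_div_iff₀ (by positivity) (by positivity), one_mul]
  exact_mod_cast Nat.factorial_sub_two_mul_sq_le hk

lemma tendsto_factorial_rpow_div_factorial_add_two {ε : ℝ} (hε : 0 < ε) :
    Tendsto (fun n : ℕ => (n ! : ℝ) ^ (1 + ε) / (2 * (n + 2)!)) atTop atTop := by
  have hexp : Tendsto (fun n : ℕ => Real.exp (n + 2) / (2 * ((n : ℝ) + 2) ^ 2)) atTop atTop := by
    have := (Real.tendsto_exp_div_pow_atTop 2).comp
      (tendsto_atTop_add_const_right _ 2 tendsto_natCast_atTop_atTop)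
    exact (this.atTop_div_const two_pos).congr fun n => by simp [div_div, mul_comm]
  refine tendsto_atTop_mono' _ ?_ hexp
  filter_upwards [FloorSemiring.eventually_mul_pow_lt_factorial_sub
    (Real.exp (2 / ε)) (Real.exp (1 / ε)) 0] with n hn
  rw [Nat.sub_zero] at hn
  have hfac_pos : (0 : ℝ) < n ! := by exact_mod_cast n.factorial_pos
  -- `exp (2 / ε) * exp (1 / ε) ^ n = exp ((n + 2) / ε)`, raised to the power `ε`
  have hlt : Real.exp (n + 2) ≤ (n ! : ℝ) ^ ε := by
    have h := Real.rpow_le_rpow (by positivity) hn.le hε.le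
    rw [← Real.exp_nat_mul, ← Real.exp_add, ← Real.exp_mul] at h
    convert h using 2
    field_simp
    ring
  have hfac : ((n + 2)! : ℝ) = (n + 2) * (n + 1) * n ! := by
    push_cast [Nat.factorial_succ]; ring
  calc Real.exp (n + 2) / (2 * ((n : ℝ) + 2) ^ 2)
      ≤ (n ! : ℝ) ^ ε / (2 * ((n + 2) * (n + 1))) := by gcongr; nlinarith
    _ = (n ! : ℝ) ^ (1 + ε) / (2 * (n + 2)!) := by
      rw [hfac, Real.rpow_add hfac_pos, Real.rpow_one]
      field_simp

lemma biUnion_Ici_one_Ik : ⋃ k ∈ Ici 1, Ik k = ⋃ n : ℕ, Ik (n + 1) :=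
  iUnion_ge_eq_iUnion_nat_add Ik 1

section

variable {f : ℝ → ℝ} (hf : ∀ k, 1 ≤ k → ∀ x ∈ Ik k, f x = ((k - 2)! : ℝ))
include hf

lemma setLIntegral_enorm_biUnion_Ik_lt_top : ∫⁻ x in ⋃ k ∈ Ici 1, Ik k, ‖f x‖ₑ < ∞ := by
  have hIk (n : ℕ) : ∫⁻ x in Ik (n + 1), ‖f x‖ₑ ≤ ENNReal.ofReal (1 / ((n : ℝ) + 1) ^ 2) := by
    rw [setLIntegral_enorm_Ik (by positivity) (hf (n + 1) n.succ_pos)]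
    exact ENNReal.ofReal_le_ofReal
      (by exact_mod_cast factorial_sub_two_div_le_one_div_sq n.succ_pos)
  have hsum : Summable fun n : ℕ => 1 / ((n : ℝ) + 1) ^ 2 := by
    simpa using (summable_nat_add_iff 1).2 (Real.summable_one_div_nat_pow.2 one_lt_two)
  rw [biUnion_Ici_one_Ik]
  calc ∫⁻ x in ⋃ n : ℕ, Ik (n + 1), ‖f x‖ₑ
      ≤ ∑' n : ℕ, ∫⁻ x in Ik (n + 1), ‖f x‖ₑ := lintegral_iUnion_le _ _
    _ ≤ ∑' n : ℕ, ENNReal.ofReal (1 / ((n : ℝ) + 1) ^ 2) := ENNReal.tsum_le_tsum hIk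
    _ = ENNReal.ofReal (∑' n : ℕ, 1 / ((n : ℝ) + 1) ^ 2) :=
      (ENNReal.ofReal_tsum_of_nonneg (fun n => by positivity) hsum).symm
    _ < ∞ := ENNReal.ofReal_lt_top

lemma setLIntegral_enorm_biUnion_Ik_rpow_eq_top {ε : ℝ} (hε : 0 < ε) :
    ∫⁻ x in ⋃ k ∈ Ici 1, Ik k, ‖f x ^ (1 + ε)‖ₑ = ∞ := by
  by_contra hfin
  have hIk (n : ℕ) : ENNReal.ofReal ((n ! : ℝ) ^ (1 + ε) / (2 * (n + 2)!)) ≤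
      ∫⁻ x in ⋃ k ∈ Ici 1, Ik k, ‖f x ^ (1 + ε)‖ₑ := by
    rw [← setLIntegral_enorm_Ik (f := fun x => f x ^ (1 + ε)) (by positivity)
      (fun x hx => by simp only [hf (n + 2) (by omega) x hx, Nat.add_sub_cancel])]
    exact lintegral_mono_set (subset_biUnion_of_mem (u := Ik) (by simp : n + 2 ∈ Ici 1))
  obtain ⟨n, hn⟩ := ((tendsto_factorial_rpow_div_factorial_add_two hε).eventually_gt_atTop
    (∫⁻ x in ⋃ k ∈ Ici 1, Ik k, ‖f x ^ (1 + ε)‖ₑ).toReal).exists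
  exact hn.not_ge ((ENNReal.ofReal_le_iff_le_toReal hfin).1 (hIk n))

end

theorem stmt12_general (w : ℝ → ℝ) (hm : Measurable w)
    (hw12 : ∀ x ∈ Ik 1 ∪ Ik 2, w x = 1)
    (hw : ∀ k, 3 ≤ k → ∀ x ∈ Ik k, w x = (Nat.factorial (k - 2) : ℝ)) :
    Integrable w (volume.restrict (⋃ k ∈ Set.Ici 1, Ik k)) ∧
      ∀ ε : ℝ, 0 < ε →
        ¬ Integrable (fun x => w x ^ (1 + ε))
            (volume.restrict (⋃ k ∈ Set.Ici 1, Ik k)) := by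
  -- for `k = 1, 2` the truncated `k - 2` is `0`, so `hw12` is the same formula
  have hwk : ∀ k, 1 ≤ k → ∀ x ∈ Ik k, w x = ((k - 2)! : ℝ) := by
    intro k hk x hx
    rcases le_or_gt 3 k with h3 | h3
    · exact hw k h3 x hx
    · interval_cases k <;> simpa using hw12 x (by simp [hx])
  refine ⟨⟨hm.aestronglyMeasurable, ?_⟩, fun ε hε hint => ?_⟩
  · exact hasFiniteIntegral_iff_enorm.2 (setLIntegral_enorm_biUnion_Ik_lt_top hwk)
  · exact (hasFiniteIntegral_iff_enorm.1 hint.2).ne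
      (setLIntegral_enorm_biUnion_Ik_rpow_eq_top hwk hε)

theorem stmt12 (w : ℝ → ℝ) (hm : Measurable w) (hw1 : ∀ x, 1 ≤ w x)
    (hw12 : ∀ x ∈ Ik 1 ∪ Ik 2, w x = 1)
    (hw : ∀ k, 3 ≤ k → ∀ x ∈ Ik k, w x = (Nat.factorial (k - 2) : ℝ)) :
    Integrable w (volume.restrict (⋃ k ∈ Set.Ici 1, Ik k)) ∧
      ∀ ε : ℝ, 0 < ε →
        ¬ Integrable (fun x => w x ^ (1 + ε))
            (volume.restrict (⋃ k ∈ Set.Ici 1, Ik k)) :=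
  stmt12_general w hm hw12 hw
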